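/- arXiv:1012.3147 — 4 statements merged into one kernel-verified Lean document; each statement's English description precedes it below -/
import Mathlib

section
/- The polynomial system p₁ = x₁²+x₂²−1, p₂ = x₃²+x₄²−1, p₃ = (1+x₁)²+x₂²−2, p₄ = (1+x₃)²+x₄²−2, p₅ = (1+x₁x₃+x₂x₄)²+(x₁x₄−x₂x₃)²−2 satisfies the polynomial identity r₁p₁ + r₂p₂ + r₃p₃ + r₄p₄ + r₅p₅ = 1, where r₁ = (1/2)(−x₁−2x₄²+x₁x₃²+x₂x₃x₄−x₂x₃²x₄−x₂x₄³), r₂ = (1/2)(−2−x₃+2x₁²−x₂x₄), r₃ = (1/2)(x₁−x₁x₃²−x₂x₃x₄), r₄ = (1/2)x₃, r₅ = (1/2)x₂x₄. -/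
open MvPolynomial

theorem MvPolynomial.two_mul_C_half {σ K : Type*} [Field K] [NeZero (2 : K)] :
    (2 : MvPolynomial σ K) * C (1 / 2) = 1 := by
  rw [← map_ofNat C 2, ← C_mul, mul_one_div_cancel two_ne_zero, C_1]

theorem stmt_10 :
    let x : Fin 4 → MvPolynomial (Fin 4) ℝ := fun i => X i
    let p₁ := x 0 ^ 2 + x 1 ^ 2 - 1
    let p₂ := x 2 ^ 2 + x 3 ^ 2 - 1
    let p₃ := (1 + x 0) ^ 2 + x 1 ^ 2 - 2
    let p₄ := (1 + x 2) ^ 2 + x 3 ^ 2 - 2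
    let p₅ := (1 + x 0 * x 2 + x 1 * x 3) ^ 2 + (x 0 * x 3 - x 1 * x 2) ^ 2 - 2
    let r₁ := (C (1 / 2 : ℝ) : MvPolynomial (Fin 4) ℝ) *
      (-x 0 - 2 * x 3 ^ 2 + x 0 * x 2 ^ 2 + x 1 * x 2 * x 3 - x 1 * x 2 ^ 2 * x 3 - x 1 * x 3 ^ 3)
    let r₂ := (C (1 / 2 : ℝ) : MvPolynomial (Fin 4) ℝ) * (-2 - x 2 + 2 * x 0 ^ 2 - x 1 * x 3)
    let r₃ := (C (1 / 2 : ℝ) : MvPolynomial (Fin 4) ℝ) * (x 0 - x 0 * x 2 ^ 2 - x 1 * x 2 * x 3)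
    let r₄ := (C (1 / 2 : ℝ) : MvPolynomial (Fin 4) ℝ) * x 2
    let r₅ := (C (1 / 2 : ℝ) : MvPolynomial (Fin 4) ℝ) * (x 1 * x 3)
    r₁ * p₁ + r₂ * p₂ + r₃ * p₃ + r₄ * p₄ + r₅ * p₅ = 1 := by
  intro x p₁ p₂ p₃ p₄ p₅ r₁ r₂ r₃ r₄ r₅
  -- With `C (1 / 2)` kept as an atom, the left side is `C (1 / 2) * 2` as a polynomial identity.
  linear_combination (two_mul_C_half : (2 : MvPolynomial (Fin 4) ℝ) * C (1 / 2) = 1)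
end

section
/- There are no real numbers x₁, x₂, x₃, x₄ simultaneously satisfying x₁²+x₂² = 1, x₃²+x₄² = 1, (1+x₁)²+x₂² = 2, (1+x₃)²+x₄² = 2, and (1+x₁x₃+x₂x₄)²+(x₁x₄−x₂x₃)² = 2. -/
/-!
Read `(x₁, x₂)` and `(x₃, x₄)` as unit complex numbers `z` and `w`; the three conditions of the
form `(1 + a) ^ 2 + b ^ 2 = 2` say `|1 + z|² = |1 + w|² = |1 + conj z * w|² = 2`. For a unit
vector `a + b i`, `|1 + a + b i|² = 2 + 2 a`, so each condition says that the real part vanishes.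
Then `z, w ∈ {± i}`, whence `conj z * w = ± 1` is real and nonzero: a contradiction.
-/

theorem eq_zero_of_sq_add_sq_eq_one_of_one_add_sq_add_sq_eq_two {R : Type*} [CommRing R]
    [NoZeroDivisors R] [CharZero R] {a b : R} (hunit : a ^ 2 + b ^ 2 = 1)
    (h : (1 + a) ^ 2 + b ^ 2 = 2) : a = 0 := by
  have htwo : 2 * a = 0 := by linear_combination h - hunit
  simpa using htwo

theorem stmt_11 :
    ¬ ∃ x₁ x₂ x₃ x₄ : ℝ,
      x₁ ^ 2 + x₂ ^ 2 = 1 ∧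
      x₃ ^ 2 + x₄ ^ 2 = 1 ∧
      (1 + x₁) ^ 2 + x₂ ^ 2 = 2 ∧
      (1 + x₃) ^ 2 + x₄ ^ 2 = 2 ∧
      (1 + x₁ * x₃ + x₂ * x₄) ^ 2 + (x₁ * x₄ - x₂ * x₃) ^ 2 = 2 := by
  rintro ⟨x₁, x₂, x₃, x₄, hz, hw, hz₀, hw₀, hzw₀⟩
  have hzw : (x₁ * x₃ + x₂ * x₄) ^ 2 + (x₁ * x₄ - x₂ * x₃) ^ 2 = 1 := by
    linear_combination (x₃ ^ 2 + x₄ ^ 2) * hz + hw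
  have hx₁ := eq_zero_of_sq_add_sq_eq_one_of_one_add_sq_add_sq_eq_two hz hz₀
  have hx₃ := eq_zero_of_sq_add_sq_eq_one_of_one_add_sq_add_sq_eq_two hw hw₀
  have hprod := eq_zero_of_sq_add_sq_eq_one_of_one_add_sq_add_sq_eq_two hzw (by rwa [← add_assoc])
  subst hx₁ hx₃
  have hsq : (x₂ * x₄) ^ 2 = 1 := by linear_combination x₄ ^ 2 * hz + hw
  rw [zero_mul, zero_add] at hprod
  rw [hprod] at hsq
  norm_num at hsq
end

section
/- There do not exist four unit vectors v₁ = (1,0), v₂ = (1,1)/√2, v₃ = (1, z)/√2, v₄ = (1, w)/√2 in ℂ² (with |z| = |w| = 1) that are pairwise mutually unbiased, i.e., such that |⟨v_i|v_j⟩|² = 1/2 for all i ≠ j. -/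
/-!
With `c = 1/√2`, the inner product of `c • (1, a)` and `c • (1, b)` is `(1 + conj a * b) / 2`, and for
unimodular `a`, `b` one has `|1 + conj a * b|² = 2 (1 + Re (conj a * b))`. So `v₂, v₃, v₄` are pairwise
unbiased exactly when `Re z = Re w = Re (conj z * w) = 0`. The first two force `z, w ∈ {±i}`, and then
`conj z * w = ±1` has nonzero real part.
-/

noncomputable section

/-- The four candidate vectors in ℂ². -/
def muVecs (z w : ℂ) : Fin 4 → (Fin 2 → ℂ)
  | 0 => ![1, 0]
  | 1 => (1 / Real.sqrt 2 : ℂ) • ![1, 1]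
  | 2 => (1 / Real.sqrt 2 : ℂ) • ![1, z]
  | 3 => (1 / Real.sqrt 2 : ℂ) • ![1, w]

/-- Standard Hermitian inner product on ℂ². -/
def herm (u v : Fin 2 → ℂ) : ℂ := ∑ i, star (u i) * v i

open Complex ComplexConjugate

theorem herm_smul_smul (c : ℂ) (u v : Fin 2 → ℂ) :
    herm (c • u) (c • v) = normSq c * herm u v := by
  simp only [herm, Fin.sum_univ_two, Pi.smul_apply, smul_eq_mul, star_mul', star_def,
    ← mul_conj]
  ring

theorem herm_cons_one (a b : ℂ) : herm ![1, a] ![1, b] = 1 + conj a * b := by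
  simp [herm, Fin.sum_univ_two]

theorem normSq_one_add_of_norm_eq_one {u : ℂ} (hu : ‖u‖ = 1) :
    normSq (1 + u) = 2 * (1 + u.re) := by
  have hu' : normSq u = 1 := by rw [← Complex.sq_norm, hu, one_pow]
  rw [normSq_add, map_one, hu', one_mul, conj_re]
  ring

theorem norm_herm_sq_eq_half_iff {a b : ℂ} (ha : ‖a‖ = 1) (hb : ‖b‖ = 1) :
    ‖herm ((1 / Real.sqrt 2 : ℂ) • ![1, a]) ((1 / Real.sqrt 2 : ℂ) • ![1, b])‖ ^ 2 = 1 / 2 ↔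
      (conj a * b).re = 0 := by
  have hc : normSq (1 / Real.sqrt 2 : ℂ) = 1 / 2 := by
    rw [← ofReal_one, ← ofReal_div, normSq_ofReal, div_mul_div_comm, one_mul,
      Real.mul_self_sqrt zero_le_two]
  have hab : ‖conj a * b‖ = 1 := by rw [norm_mul, RCLike.norm_conj, ha, hb, one_mul]
  rw [herm_smul_smul, herm_cons_one, hc, Complex.sq_norm, map_mul, normSq_ofReal,
    normSq_one_add_of_norm_eq_one hab]
  constructor <;> intro h <;> linarith

theorem re_conj_mul_ne_zero_of_re_eq_zero {z w : ℂ} (hz : ‖z‖ = 1) (hw : ‖w‖ = 1)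
    (hz0 : z.re = 0) (hw0 : w.re = 0) : (conj z * w).re ≠ 0 := by
  have hz' : z.im * z.im = 1 := by
    simpa [normSq_apply, hz0, hz] using normSq_eq_norm_sq z
  have hw' : w.im * w.im = 1 := by
    simpa [normSq_apply, hw0, hw] using normSq_eq_norm_sq w
  have hzw : (conj z * w).re = z.im * w.im := by simp [hz0]
  rw [hzw]
  intro h0
  have hsq : (z.im * w.im) * (z.im * w.im) = 1 := by linear_combination w.im * w.im * hz' + hw'
  simp [h0] at hsq

theorem stmt_12 :
    ¬ ∃ z w : ℂ, ‖z‖ = 1 ∧ ‖w‖ = 1 ∧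
      ∀ i j : Fin 4, i ≠ j →
        ‖herm (muVecs z w i) (muVecs z w j)‖ ^ 2 = 1 / 2 := by
  rintro ⟨z, w, hz, hw, h⟩
  have hz0 : z.re = 0 := by
    simpa using (norm_herm_sq_eq_half_iff norm_one hz).1 (h 1 2 (by decide))
  have hw0 : w.re = 0 := by
    simpa using (norm_herm_sq_eq_half_iff norm_one hw).1 (h 1 3 (by decide))
  exact re_conj_mul_ne_zero_of_re_eq_zero hz hw hz0 hw0
    ((norm_herm_sq_eq_half_iff hz hw).1 (h 2 3 (by decide)))

end
end

section
/- If a symmetric positive semidefinite N×N real matrix G and a symmetric matrix W with 0 ≼ W ≼ I and tr(W) = N − n satisfy tr(GW) = 0, then rank(G) ≤ n. -/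
/-!
With square roots `G = P²`, `W = Q²`, the trace `tr(GW) = tr((PQ)ᴴ(PQ))` is the squared Frobenius
norm of `PQ`, so `tr(GW) = 0` forces `GW = 0`, and then `rank G + rank W ≤ N`. On the other hand the
eigenvalues of `W` are at most `1`, so `N - n = tr W` is at most the number of nonzero eigenvalues,
which is `rank W`.
-/

open Matrix
open scoped ComplexOrder

namespace Matrix

variable {n 𝕜 : Type*} [Fintype n] [DecidableEq n] [RCLike 𝕜]

open scoped MatrixOrder in
lemma IsHermitian.eigenvalues_le_one {A : Matrix n n 𝕜} (hA : A.IsHermitian)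
    (hA1 : (1 - A).PosSemidef) (i : n) : hA.eigenvalues i ≤ 1 := by
  have hmem : 1 - hA.eigenvalues i ∈ spectrum ℝ (1 - A) := by
    rw [← map_one (algebraMap ℝ (Matrix n n 𝕜)), ← spectrum.singleton_sub_eq]
    exact Set.sub_mem_sub rfl (hA.eigenvalues_mem_spectrum_real i)
  linarith [spectrum_nonneg_of_nonneg hA1.nonneg hmem]

lemma IsHermitian.re_trace_le_rank {A : Matrix n n 𝕜} (hA : A.IsHermitian)
    (hA1 : (1 - A).PosSemidef) : RCLike.re A.trace ≤ A.rank := by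
  rw [hA.trace_eq_sum_eigenvalues, hA.rank_eq_card_non_zero_eigs, Fintype.card_subtype,
    map_sum]
  simp only [RCLike.ofReal_re]
  rw [← Finset.sum_filter_ne_zero]
  calc ∑ i ∈ {i | hA.eigenvalues i ≠ 0}, hA.eigenvalues i
      ≤ ∑ i ∈ {i | hA.eigenvalues i ≠ 0}, (1 : ℝ) :=
        Finset.sum_le_sum fun i _ ↦ hA.eigenvalues_le_one hA1 i
    _ = _ := by simp

open scoped MatrixOrder in
lemma PosSemidef.mul_eq_zero_of_trace_mul_eq_zero {A B : Matrix n n 𝕜} (hA : A.PosSemidef)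
    (hB : B.PosSemidef) (hAB : (A * B).trace = 0) : A * B = 0 := by
  obtain ⟨P, hP, rfl⟩ : ∃ P, Pᴴ = P ∧ P * P = A :=
    ⟨CFC.sqrt A, (CFC.sqrt_nonneg A).posSemidef.1, CFC.sqrt_mul_sqrt_self A hA.nonneg⟩
  obtain ⟨Q, hQ, rfl⟩ : ∃ Q, Qᴴ = Q ∧ Q * Q = B :=
    ⟨CFC.sqrt B, (CFC.sqrt_nonneg B).posSemidef.1, CFC.sqrt_mul_sqrt_self B hB.nonneg⟩
  have hPQ : P * Q = 0 := by
    rw [← trace_mul_conjTranspose_self_eq_zero_iff, conjTranspose_mul, hP, hQ, ← hAB,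
      ← Matrix.mul_assoc, trace_mul_comm, Matrix.mul_assoc, Matrix.mul_assoc]
  rw [Matrix.mul_assoc, ← Matrix.mul_assoc P Q, hPQ, Matrix.zero_mul, Matrix.mul_zero]

lemma PosSemidef.rank_add_rank_le_of_trace_mul_eq_zero {A B : Matrix n n 𝕜} (hA : A.PosSemidef)
    (hB : B.PosSemidef) (hAB : (A * B).trace = 0) : A.rank + B.rank ≤ Fintype.card n :=
  rank_add_rank_le_card_of_mul_eq_zero (hA.mul_eq_zero_of_trace_mul_eq_zero hB hAB)

end Matrix

theorem stmt_16_general (N n : ℕ) (G W : Matrix (Fin N) (Fin N) ℝ)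
    (hG : G.PosSemidef) (hW : W.PosSemidef) (hW1 : (1 - W).PosSemidef)
    (hWtr : W.trace = (N : ℝ) - n) (h0 : (G * W).trace = 0) :
    G.rank ≤ n := by
  have hrank_sum : G.rank + W.rank ≤ N := by
    simpa using hG.rank_add_rank_le_of_trace_mul_eq_zero hW h0
  have htrace_le : (N : ℝ) - n ≤ W.rank := by
    simpa [hWtr] using hW.1.re_trace_le_rank hW1
  have hN : N ≤ W.rank + n := by exact_mod_cast (show (N : ℝ) ≤ W.rank + n by linarith)
  omega

theorem stmt_16 (N n : ℕ) (hn : n ≤ N) (G W : Matrix (Fin N) (Fin N) ℝ)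
    (hG : G.PosSemidef) (hW : W.PosSemidef) (hW1 : (1 - W).PosSemidef)
    (hWtr : W.trace = (N : ℝ) - n) (h0 : (G * W).trace = 0) :
    G.rank ≤ n :=
  stmt_16_general N n G W hG hW hW1 hWtr h0
end
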